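/- For ADAPD-OG iterates, if η < 1/L, then for all k ≥ 0: L_η(X^{k+1},X0^{k+1};Y^{k+1},Z^{k+1}) − L_η(X^k,X0^k;Y^k,Z^k) ≤ ((Lη − 1)/(2η))‖X^{k+1}−X^k‖_F² − (1/(2η))‖X0^{k+1}−X0^k‖_F² + η‖Y^{k+1}−Y^k‖_F² + η‖Z^{k+1}−Z^k‖_F². -/

import Mathlib

open Matrix Finset

attribute [local instance] Matrix.frobeniusNormedAddCommGroup Matrix.frobeniusNormedSpace

noncomputable section

variable {N p : ℕ}

/-- Frobenius inner product on `N × p` real matrices. -/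
def frobInner (A B : Matrix (Fin N) (Fin p) ℝ) : ℝ := ∑ i, ∑ j, A i j * B i j

/-- Squared Frobenius norm. -/
def frobSq (A : Matrix (Fin N) (Fin p) ℝ) : ℝ := frobInner A A

/-- Frobenius norm. -/
def frobNorm (A : Matrix (Fin N) (Fin p) ℝ) : ℝ := Real.sqrt (frobInner A A)

/-- The continuous linear functional `H ↦ ⟨G, H⟩_F`. -/
def frobCLM (G : Matrix (Fin N) (Fin p) ℝ) : Matrix (Fin N) (Fin p) ℝ →L[ℝ] ℝ :=
  LinearMap.toContinuousLinearMap
    { toFun := fun H => frobInner G H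
      map_add' := by
        intro x y
        simp [frobInner, Matrix.add_apply, mul_add, Finset.sum_add_distrib]
      map_smul' := by
        intro c x
        simp [frobInner, Matrix.smul_apply, Finset.mul_sum]
        ring_nf
        apply Finset.sum_congr rfl; intro i _
        apply Finset.sum_congr rfl; intro j _; ring }

/-- Spectral norm (operator 2-norm) of a square real matrix. -/
def specNorm {N : ℕ} (M : Matrix (Fin N) (Fin N) ℝ) : ℝ :=
  ‖Matrix.toEuclideanCLM (𝕜 := ℝ) M‖

/-- The all-ones `N × N` matrix. -/
def onesMat (N : ℕ) : Matrix (Fin N) (Fin N) ℝ := fun _ _ => 1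

/-- Quadratic form `‖A‖_M² := ⟨A, M A⟩_F` for a symmetric `M` (possibly negative). -/
def quadForm (M : Matrix (Fin N) (Fin N) ℝ) (A : Matrix (Fin N) (Fin p) ℝ) : ℝ :=
  frobInner A (M * A)

/-- Augmented Lagrangian `L_η(X, X0; Y, Z)`, where `S` plays the role of `√(I−W)`. -/
def Lag (F : Matrix (Fin N) (Fin p) ℝ → ℝ) (S : Matrix (Fin N) (Fin N) ℝ) (η : ℝ)
    (X X0 Y Z : Matrix (Fin N) (Fin p) ℝ) : ℝ :=
  F X + frobInner Y (X - X0) + (2*η)⁻¹ * frobSq (X - X0)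
    + frobInner Z (S * X0) + (2*η)⁻¹ * frobSq (S * X0)


/-!
The change of the augmented Lagrangian over one iteration is split into the three block updates.
The `X`-step is a gradient step on `F`, so the descent lemma for the `L`-smooth `F` bounds it by
`(Lη - 1)/(2η) ‖ΔX‖²`. The Lagrangian is quadratic in `X0`, and the `X0`-update is built so that
its gradient in `X0` at the old point equals `-(2/η) ΔX0`; with `S² = I - W` the exact expansion
is `-(1/2η) ‖ΔX0‖² - (1/2η) ⟨ΔX0, (I + W) ΔX0⟩`, and `I + W ⪰ 0`. The Lagrangian is affine in the
duals, and the dual updates turn `X - X0` and `S X0` into `η ΔY` and `η ΔZ`.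
-/

lemma frobInner_eq_trace (A B : Matrix (Fin N) (Fin p) ℝ) : frobInner A B = trace (Aᵀ * B) := by
  simp only [frobInner, trace, Matrix.diag, mul_apply, transpose_apply]
  exact Finset.sum_comm

lemma frobInner_comm (A B : Matrix (Fin N) (Fin p) ℝ) : frobInner A B = frobInner B A := by
  rw [frobInner_eq_trace, frobInner_eq_trace, ← trace_transpose, transpose_mul, transpose_transpose]

lemma frobInner_add_left (A B C : Matrix (Fin N) (Fin p) ℝ) :
    frobInner (A + B) C = frobInner A C + frobInner B C := by
  simp only [frobInner_eq_trace, transpose_add, Matrix.add_mul, trace_add]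

lemma frobInner_sub_left (A B C : Matrix (Fin N) (Fin p) ℝ) :
    frobInner (A - B) C = frobInner A C - frobInner B C := by
  simp only [frobInner_eq_trace, transpose_sub, Matrix.sub_mul, trace_sub]

lemma frobInner_smul_left (r : ℝ) (A B : Matrix (Fin N) (Fin p) ℝ) :
    frobInner (r • A) B = r * frobInner A B := by
  simp only [frobInner_eq_trace, transpose_smul, Matrix.smul_mul, trace_smul, smul_eq_mul]

lemma frobInner_neg_left (A B : Matrix (Fin N) (Fin p) ℝ) :
    frobInner (-A) B = -frobInner A B := by
  simp only [frobInner_eq_trace, transpose_neg, Matrix.neg_mul, trace_neg]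

lemma frobInner_add_right (A B C : Matrix (Fin N) (Fin p) ℝ) :
    frobInner A (B + C) = frobInner A B + frobInner A C := by
  simp only [frobInner_eq_trace, Matrix.mul_add, trace_add]

lemma frobInner_sub_right (A B C : Matrix (Fin N) (Fin p) ℝ) :
    frobInner A (B - C) = frobInner A B - frobInner A C := by
  simp only [frobInner_eq_trace, Matrix.mul_sub, trace_sub]

lemma frobInner_smul_right (r : ℝ) (A B : Matrix (Fin N) (Fin p) ℝ) :
    frobInner A (r • B) = r * frobInner A B := by
  simp only [frobInner_eq_trace, Matrix.mul_smul, trace_smul, smul_eq_mul]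

lemma frobInner_mul_right (M : Matrix (Fin N) (Fin N) ℝ) (A B : Matrix (Fin N) (Fin p) ℝ) :
    frobInner A (M * B) = frobInner (Mᵀ * A) B := by
  simp only [frobInner_eq_trace, transpose_mul, transpose_transpose, Matrix.mul_assoc]

lemma Matrix.PosSemidef.frobInner_mul_self_nonneg {M : Matrix (Fin N) (Fin N) ℝ}
    (hM : M.PosSemidef) (A : Matrix (Fin N) (Fin p) ℝ) : 0 ≤ frobInner A (M * A) := by
  rw [frobInner_eq_trace, ← Matrix.mul_assoc, ← conjTranspose_eq_transpose_of_trivial]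
  exact (hM.conjTranspose_mul_mul_same A).trace_nonneg

lemma frobSq_add (A B : Matrix (Fin N) (Fin p) ℝ) :
    frobSq (A + B) = frobSq A + 2 * frobInner A B + frobSq B := by
  simp only [frobSq, frobInner_add_left, frobInner_add_right, frobInner_comm B A]
  ring

lemma frobSq_sub (A B : Matrix (Fin N) (Fin p) ℝ) :
    frobSq (A - B) = frobSq A - 2 * frobInner A B + frobSq B := by
  simp only [frobSq, frobInner_sub_left, frobInner_sub_right, frobInner_comm B A]
  ring

lemma frobInner_self (A : Matrix (Fin N) (Fin p) ℝ) : frobInner A A = frobSq A := rfl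

-- Mathlib's Frobenius norm on matrices is, by definition, the norm of this vector.
def toL2 (A : Matrix (Fin N) (Fin p) ℝ) : WithLp 2 (Fin N → WithLp 2 (Fin p → ℝ)) :=
  WithLp.toLp 2 fun i => WithLp.toLp 2 (A i)

lemma norm_toL2 (A : Matrix (Fin N) (Fin p) ℝ) : ‖toL2 A‖ = ‖A‖ := rfl

lemma inner_toL2 (A B : Matrix (Fin N) (Fin p) ℝ) : inner ℝ (toL2 A) (toL2 B) = frobInner A B := by
  simp [toL2, frobInner, PiLp.inner_apply, mul_comm]

lemma frobNorm_eq_norm (A : Matrix (Fin N) (Fin p) ℝ) : frobNorm A = ‖A‖ := by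
  rw [frobNorm, ← inner_toL2, ← norm_eq_sqrt_real_inner, norm_toL2]

lemma frobSq_eq_norm_sq (A : Matrix (Fin N) (Fin p) ℝ) : frobSq A = ‖A‖ ^ 2 := by
  rw [frobSq, ← inner_toL2, real_inner_self_eq_norm_sq, norm_toL2]

lemma frobInner_le_norm_mul_norm (A B : Matrix (Fin N) (Fin p) ℝ) :
    frobInner A B ≤ ‖A‖ * ‖B‖ := by
  rw [← inner_toL2, ← norm_toL2, ← norm_toL2]
  exact real_inner_le_norm _ _

theorem le_add_fderiv_add_sq_of_fderiv_sub_le {E : Type*} [NormedAddCommGroup E]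
    [NormedSpace ℝ E] {f : E → ℝ} {f' : E → E →L[ℝ] ℝ} {L : ℝ}
    (hf : ∀ x, HasFDerivAt f (f' x) x) (hf' : ∀ x y v, f' y v - f' x v ≤ L * ‖y - x‖ * ‖v‖)
    (x y : E) : f y ≤ f x + f' x (y - x) + L / 2 * ‖y - x‖ ^ 2 := by
  set d := y - x
  have hpath (t : ℝ) : HasDerivAt (fun t : ℝ => x + t • d) d t := by
    simpa using ((hasDerivAt_id t).smul_const d).const_add x
  have hψ (t : ℝ) : HasDerivAt (fun t : ℝ => f (x + t • d) - f x - t * f' x d)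
      (f' (x + t • d) d - f' x d) t :=
    (((hf _).comp_hasDerivAt t (hpath t)).sub_const (f x)).sub
      (hasDerivAt_mul_const (f' x d))
  have hB (t : ℝ) : HasDerivAt (fun t : ℝ => L / 2 * t ^ 2 * ‖d‖ ^ 2) (L * t * ‖d‖ ^ 2) t := by
    refine (((hasDerivAt_pow 2 t).const_mul (L / 2)).mul_const (‖d‖ ^ 2)).congr_deriv ?_
    push_cast
    ring
  have key := image_le_of_deriv_right_le_deriv_boundary (a := 0) (b := 1)
    (fun t _ => (hψ t).continuousAt.continuousWithinAt) (fun t _ => (hψ t).hasDerivWithinAt)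
    (by simp) (fun t _ => (hB t).continuousAt.continuousWithinAt)
    (fun t _ => (hB t).hasDerivWithinAt) (fun t ht => ?_) (Set.right_mem_Icc.2 zero_le_one)
  · simp only [one_smul, one_mul, one_pow, add_sub_cancel, d] at key ⊢
    linarith
  · have := hf' x (x + t • d) d
    rw [add_sub_cancel_left, norm_smul, Real.norm_of_nonneg ht.1] at this
    linarith

theorem le_add_frobInner_add_frobSq_of_lipschitz {L : ℝ} {F : Matrix (Fin N) (Fin p) ℝ → ℝ}
    {G : Matrix (Fin N) (Fin p) ℝ → Matrix (Fin N) (Fin p) ℝ}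
    (hgrad : ∀ U, HasFDerivAt F (frobCLM (G U)) U)
    (hLip : ∀ U V, frobNorm (G U - G V) ≤ L * frobNorm (U - V)) (U V : Matrix (Fin N) (Fin p) ℝ) :
    F V ≤ F U + frobInner (G U) (V - U) + L / 2 * frobSq (V - U) := by
  rw [frobSq_eq_norm_sq]
  refine le_add_fderiv_add_sq_of_fderiv_sub_le hgrad (fun U V H => ?_) U V
  have hG := hLip V U
  rw [frobNorm_eq_norm, frobNorm_eq_norm] at hG
  calc frobInner (G V) H - frobInner (G U) H = frobInner (G V - G U) H :=
        (frobInner_sub_left _ _ _).symm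
    _ ≤ ‖G V - G U‖ * ‖H‖ := frobInner_le_norm_mul_norm _ _
    _ ≤ L * ‖V - U‖ * ‖H‖ := mul_le_mul_of_nonneg_right hG (norm_nonneg H)

section Lagrangian

variable (F : Matrix (Fin N) (Fin p) ℝ → ℝ) (S : Matrix (Fin N) (Fin N) ℝ) {η : ℝ}

lemma Lag_sub_Lag_dual_eq (x u y y' z z' : Matrix (Fin N) (Fin p) ℝ) :
    Lag F S η x u y' z' - Lag F S η x u y z
      = frobInner (y' - y) (x - u) + frobInner (z' - z) (S * u) := by
  simp only [Lag, frobInner_sub_left]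
  ring

lemma Lag_sub_Lag_primal_eq (x x' u y z : Matrix (Fin N) (Fin p) ℝ) :
    Lag F S η x' u y z - Lag F S η x u y z
      = F x' - F x + frobInner (y + η⁻¹ • (x - u)) (x' - x) + (2 * η)⁻¹ * frobSq (x' - x) := by
  have hsplit : x' - u = (x - u) + (x' - x) := by abel
  simp only [Lag, hsplit, frobSq_add, frobInner_add_right, frobInner_add_left, frobInner_smul_left]
  ring

lemma Lag_sub_Lag_consensus_eq (x u u' y z : Matrix (Fin N) (Fin p) ℝ) :
    Lag F S η x u' y z - Lag F S η x u y z
      = frobInner (Sᵀ * z - y - η⁻¹ • (x - u) + η⁻¹ • (Sᵀ * S * u)) (u' - u)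
        + (2 * η)⁻¹ * frobSq (u' - u) + (2 * η)⁻¹ * frobSq (S * (u' - u)) := by
  obtain ⟨d, rfl⟩ : ∃ d, u' = u + d := ⟨u' - u, by abel⟩
  simp only [Lag, add_sub_cancel_left, sub_add_eq_sub_sub, Matrix.mul_add, frobSq_sub (x - u),
    frobSq_add (S * u), frobInner_sub_right y, frobInner_add_right z, frobInner_mul_right S z d,
    frobInner_mul_right S (S * u) d, frobInner_add_left, frobInner_sub_left, frobInner_smul_left,
    Matrix.mul_assoc]
  ring

lemma Lag_sub_Lag_dual_update {x u y y' z z' : Matrix (Fin N) (Fin p) ℝ} (hη : η ≠ 0)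
    (hy : y' = y + η⁻¹ • (x - u)) (hz : z' = z + η⁻¹ • (S * u)) :
    Lag F S η x u y' z' - Lag F S η x u y z = η * frobSq (y' - y) + η * frobSq (z' - z) := by
  have hx : x - u = η • (y' - y) := by rw [hy, add_sub_cancel_left, smul_inv_smul₀ hη]
  have hu : S * u = η • (z' - z) := by rw [hz, add_sub_cancel_left, smul_inv_smul₀ hη]
  rw [Lag_sub_Lag_dual_eq, hx, hu, frobInner_smul_right, frobInner_smul_right, frobInner_self,
    frobInner_self]

lemma Lag_sub_Lag_primal_update_le {L : ℝ} {x x' u y z g : Matrix (Fin N) (Fin p) ℝ}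
    (hη : η ≠ 0) (hdesc : F x' ≤ F x + frobInner g (x' - x) + L / 2 * frobSq (x' - x))
    (hx : x' = u - η • (g + y)) :
    Lag F S η x' u y z - Lag F S η x u y z ≤ (L * η - 1) / (2 * η) * frobSq (x' - x) := by
  have hcoef : y + η⁻¹ • (x - u) = -g - η⁻¹ • (x' - x) := by
    rw [hx]
    match_scalars <;> field
  calc Lag F S η x' u y z - Lag F S η x u y z
        = F x' - F x - frobInner g (x' - x) - (2 * η)⁻¹ * frobSq (x' - x) := by
          rw [Lag_sub_Lag_primal_eq, hcoef, frobInner_sub_left, frobInner_neg_left,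
            frobInner_smul_left, frobInner_self]
          ring
    _ ≤ (L / 2 - (2 * η)⁻¹) * frobSq (x' - x) := by linarith
    _ = (L * η - 1) / (2 * η) * frobSq (x' - x) := by field_simp

lemma Lag_sub_Lag_consensus_update_le {W : Matrix (Fin N) (Fin N) ℝ}
    {x u u' y z : Matrix (Fin N) (Fin p) ℝ} (hS : Sᵀ = S) (hSS : S * S = 1 - W)
    (hW : (1 + W).PosSemidef) (hη : 0 < η)
    (hu : u' = (2 : ℝ)⁻¹ • (W * u + x + η • (y - S * z))) :
    Lag F S η x u' y z - Lag F S η x u y z ≤ -(2 * η)⁻¹ * frobSq (u' - u) := by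
  have hcoef : Sᵀ * z - y - η⁻¹ • (x - u) + η⁻¹ • (Sᵀ * S * u) = -(2 * η⁻¹) • (u' - u) := by
    rw [hS, hSS, hu, Matrix.sub_mul, Matrix.one_mul]
    match_scalars <;> field
  have hquad : frobSq (S * (u' - u)) = frobSq (u' - u) - frobInner (u' - u) (W * (u' - u)) := by
    rw [← frobInner_self, frobInner_mul_right, hS, ← Matrix.mul_assoc, hSS, Matrix.sub_mul,
      Matrix.one_mul, frobInner_sub_left, frobInner_self, frobInner_comm]
  have hpsd := hW.frobInner_mul_self_nonneg (u' - u)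
  rw [Matrix.add_mul, Matrix.one_mul, frobInner_add_right, frobInner_self] at hpsd
  calc Lag F S η x u' y z - Lag F S η x u y z
        = -(2 * η)⁻¹ * frobSq (u' - u)
          - (2 * η)⁻¹ * (frobSq (u' - u) + frobInner (u' - u) (W * (u' - u))) := by
          rw [Lag_sub_Lag_consensus_eq, hcoef, hquad, frobInner_smul_left, frobInner_self]
          ring
    _ ≤ -(2 * η)⁻¹ * frobSq (u' - u) := by
          have := mul_nonneg (inv_pos.2 (mul_pos two_pos hη)).le hpsd
          linarith

end Lagrangian

theorem adapd_og_al_decrease_general (N p : ℕ)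
    -- mixing matrix assumptions
    (W : Matrix (Fin N) (Fin N) ℝ)
    (hWlb : Matrix.PosDef (1 + W))
    -- `S` is the unique positive semidefinite square root of `I − W`
    (S : Matrix (Fin N) (Fin N) ℝ) (hSpsd : S.PosSemidef) (hSsq : S * S = 1 - W)
    -- objective: `F` is `L`-smooth (gradient `G` w.r.t. the Frobenius inner product)
    (L : ℝ)
    (F : Matrix (Fin N) (Fin p) ℝ → ℝ)
    (G : Matrix (Fin N) (Fin p) ℝ → Matrix (Fin N) (Fin p) ℝ)
    (hgrad : ∀ U, HasFDerivAt F (frobCLM (G U)) U)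
    (hLip : ∀ U V, frobNorm (G U - G V) ≤ L * frobNorm (U - V))
    -- ADAPD-OG iterates with parameter `η`
    (η : ℝ) (hη : 0 < η)
    (X X0 Y Z : ℕ → Matrix (Fin N) (Fin p) ℝ)
    (hXit : ∀ k, X (k+1) = X0 k - η • (G (X k) + Y k))
    (hX0it : ∀ k, X0 (k+1) = (2:ℝ)⁻¹ • (W * X0 k + X (k+1) + η • (Y k - S * Z k)))
    (hYit : ∀ k, Y (k+1) = Y k + η⁻¹ • (X (k+1) - X0 (k+1)))
    (hZit : ∀ k, Z (k+1) = Z k + η⁻¹ • (S * X0 (k+1))) :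
    ∀ k : ℕ,
      Lag F S η (X (k+1)) (X0 (k+1)) (Y (k+1)) (Z (k+1))
          - Lag F S η (X k) (X0 k) (Y k) (Z k)
        ≤ (L*η - 1)/(2*η) * frobSq (X (k+1) - X k)
          - (2*η)⁻¹ * frobSq (X0 (k+1) - X0 k)
          + η * frobSq (Y (k+1) - Y k) + η * frobSq (Z (k+1) - Z k) := by
  intro k
  have hS : Sᵀ = S := (conjTranspose_eq_transpose_of_trivial S).symm.trans hSpsd.isHermitian
  have hdual := Lag_sub_Lag_dual_update F S hη.ne' (hYit k) (hZit k)
  have hconsensus := Lag_sub_Lag_consensus_update_le F S hS hSsq hWlb.posSemidef hη (hX0it k)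
  have hprimal := Lag_sub_Lag_primal_update_le F S (z := Z k) hη.ne'
    (le_add_frobInner_add_frobSq_of_lipschitz hgrad hLip (X k) (X (k+1))) (hXit k)
  linarith

/-- Lemma: change of the augmented Lagrangian over one ADAPD-OG iteration. -/
theorem adapd_og_al_decrease (N p : ℕ) (hN : 0 < N) (hp : 0 < p)
    -- mixing matrix assumptions
    (W : Matrix (Fin N) (Fin N) ℝ) (hWsym : Wᵀ = W)
    (hWub : Matrix.PosSemidef (1 - W)) (hWlb : Matrix.PosDef (1 + W))
    (hWnull : ∀ v : Fin N → ℝ, (1 - W).mulVec v = 0 ↔ ∃ c : ℝ, v = fun _ => c)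
    (ρ : ℝ) (hρdef : ρ = specNorm (W - (N:ℝ)⁻¹ • onesMat N)) (hρlt : ρ < 1)
    -- `S` is the unique positive semidefinite square root of `I − W`
    (S : Matrix (Fin N) (Fin N) ℝ) (hSpsd : S.PosSemidef) (hSsq : S * S = 1 - W)
    -- objective: `F` is `L`-smooth (gradient `G` w.r.t. the Frobenius inner product)
    -- and bounded below by `flb`
    (L flb : ℝ) (hL : 0 < L)
    (F : Matrix (Fin N) (Fin p) ℝ → ℝ)
    (G : Matrix (Fin N) (Fin p) ℝ → Matrix (Fin N) (Fin p) ℝ)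
    (hgrad : ∀ U, HasFDerivAt F (frobCLM (G U)) U)
    (hLip : ∀ U V, frobNorm (G U - G V) ≤ L * frobNorm (U - V))
    (hlb : ∀ U, flb ≤ F U)
    -- ADAPD-OG iterates with parameter `η`
    (η : ℝ) (hη : 0 < η)
    (X X0 Y Z : ℕ → Matrix (Fin N) (Fin p) ℝ)
    (hZ0 : ∃ U0 : Matrix (Fin N) (Fin p) ℝ, Z 0 = S * U0)
    (hY0 : Y 0 = - G (X 0))
    (hXit : ∀ k, X (k+1) = X0 k - η • (G (X k) + Y k))
    (hX0it : ∀ k, X0 (k+1) = (2:ℝ)⁻¹ • (W * X0 k + X (k+1) + η • (Y k - S * Z k)))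
    (hYit : ∀ k, Y (k+1) = Y k + η⁻¹ • (X (k+1) - X0 (k+1)))
    (hZit : ∀ k, Z (k+1) = Z k + η⁻¹ • (S * X0 (k+1)))
    (hη1 : η < 1/L) :
    ∀ k : ℕ,
      Lag F S η (X (k+1)) (X0 (k+1)) (Y (k+1)) (Z (k+1))
          - Lag F S η (X k) (X0 k) (Y k) (Z k)
        ≤ (L*η - 1)/(2*η) * frobSq (X (k+1) - X k)
          - (2*η)⁻¹ * frobSq (X0 (k+1) - X0 k)
          + η * frobSq (Y (k+1) - Y k) + η * frobSq (Z (k+1) - Z k) :=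
  adapd_og_al_decrease_general N p W hWlb S hSpsd hSsq L F G hgrad hLip η hη X X0 Y Z hXit hX0it
    hYit hZit

end
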